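/- arXiv:0801.2227 — 2 statements merged into one kernel-verified Lean document; each statement's English description precedes it below -/
import Mathlib

section
/- Let k ≥ 1 be an integer and φ(r) = ∑_{j=0}^{k} r^{2j+1}/(2j+1)!. Then for all r > 0, φ'(r)φ''(r) − φ(r)φ'''(r) = ∑_{j=0}^{k} (1/((2j)!(2k)!)) (1/(2j+1) − 1/(2k+1)) r^{2k+2j+1}, and in particular this quantity is strictly positive. -/
/-! Differentiating the truncated sinh series `φ` termwise gives the truncated cosh series `C`,
and each further derivative drops the top term: `φ'' = φ - r^(2k+1)/(2k+1)!` and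
`φ''' = C - r^(2k)/(2k)!`. Hence `φ'φ'' - φφ''' = φ r^(2k)/(2k)! - C r^(2k+1)/(2k+1)!`, whose
`j`-th term is `r^(2k+2j+1)/((2j)!(2k)!) (1/(2j+1) - 1/(2k+1))`: nonnegative for `j ≤ k` and
positive for `j = 0` once `k ≥ 1`. -/

noncomputable def phi (k : ℕ) (r : ℝ) : ℝ :=
  ∑ j ∈ Finset.range (k + 1), r ^ (2 * j + 1) / (Nat.factorial (2 * j + 1) : ℝ)

open Finset

noncomputable def coshPartial (k : ℕ) (r : ℝ) : ℝ :=
  ∑ j ∈ range (k + 1), r ^ (2 * j) / (Nat.factorial (2 * j) : ℝ)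

lemma hasDerivAt_pow_succ_div_factorial (n : ℕ) (r : ℝ) :
    HasDerivAt (fun x : ℝ ↦ x ^ (n + 1) / ((n + 1).factorial : ℝ))
      (r ^ n / (n.factorial : ℝ)) r := by
  refine ((hasDerivAt_pow (n + 1) r).div_const _).congr_deriv ?_
  rw [Nat.factorial_succ, Nat.cast_mul, Nat.add_sub_cancel]
  field_simp

lemma phi_succ (k : ℕ) (r : ℝ) :
    phi (k + 1) r = phi k r + r ^ (2 * k + 2 + 1) / ((2 * k + 2 + 1).factorial : ℝ) :=
  sum_range_succ _ _

lemma coshPartial_succ (k : ℕ) (r : ℝ) :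
    coshPartial (k + 1) r
      = coshPartial k r + r ^ (2 * k + 1 + 1) / ((2 * k + 1 + 1).factorial : ℝ) :=
  sum_range_succ _ _

lemma hasDerivAt_phi (k : ℕ) (r : ℝ) : HasDerivAt (phi k) (coshPartial k r) r := by
  induction k with
  | zero =>
    have hphi : phi 0 = id := funext fun x ↦ by simp [phi]
    simpa [hphi, coshPartial] using hasDerivAt_id r
  | succ k ih =>
    rw [funext (phi_succ k), coshPartial_succ]
    exact ih.add (hasDerivAt_pow_succ_div_factorial (2 * k + 2) r)

lemma hasDerivAt_coshPartial (k : ℕ) (r : ℝ) :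
    HasDerivAt (coshPartial k) (phi k r - r ^ (2 * k + 1) / ((2 * k + 1).factorial : ℝ)) r := by
  induction k with
  | zero =>
    have hcosh : coshPartial 0 = fun _ ↦ 1 := funext fun x ↦ by simp [coshPartial]
    simpa [hcosh, phi] using hasDerivAt_const r (1 : ℝ)
  | succ k ih =>
    rw [funext (coshPartial_succ k), phi_succ, Nat.mul_succ, add_sub_cancel_right]
    exact (ih.add (hasDerivAt_pow_succ_div_factorial (2 * k + 1) r)).congr_deriv (by ring)

lemma deriv_phi (k : ℕ) : deriv (phi k) = coshPartial k :=
  funext fun r ↦ (hasDerivAt_phi k r).deriv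

lemma deriv_coshPartial (k : ℕ) :
    deriv (coshPartial k) = fun r ↦ phi k r - r ^ (2 * k + 1) / ((2 * k + 1).factorial : ℝ) :=
  funext fun r ↦ (hasDerivAt_coshPartial k r).deriv

lemma deriv_phi_sub_top_term (k : ℕ) :
    deriv (fun r ↦ phi k r - r ^ (2 * k + 1) / ((2 * k + 1).factorial : ℝ))
      = fun r ↦ coshPartial k r - r ^ (2 * k) / ((2 * k).factorial : ℝ) :=
  funext fun r ↦ ((hasDerivAt_phi k r).sub (hasDerivAt_pow_succ_div_factorial (2 * k) r)).deriv

-- The left-hand side is the Wronskian `W(φ'', φ)`.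
lemma phi_wronskian_eq_sum (k : ℕ) (r : ℝ) :
    deriv (phi k) r * deriv (deriv (phi k)) r - phi k r * deriv (deriv (deriv (phi k))) r
      = ∑ j ∈ range (k + 1),
          (1 / ((Nat.factorial (2 * j) : ℝ) * (Nat.factorial (2 * k) : ℝ)))
            * (1 / (2 * (j : ℝ) + 1) - 1 / (2 * (k : ℝ) + 1)) * r ^ (2 * k + 2 * j + 1) := by
  rw [deriv_phi, deriv_coshPartial, deriv_phi_sub_top_term]
  have hcancel : coshPartial k r * (phi k r - r ^ (2 * k + 1) / ((2 * k + 1).factorial : ℝ))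
      - phi k r * (coshPartial k r - r ^ (2 * k) / ((2 * k).factorial : ℝ))
      = phi k r * (r ^ (2 * k) / ((2 * k).factorial : ℝ))
        - coshPartial k r * (r ^ (2 * k + 1) / ((2 * k + 1).factorial : ℝ)) := by ring
  rw [hcancel, phi, coshPartial, sum_mul, sum_mul, ← sum_sub_distrib]
  refine sum_congr rfl fun j _ ↦ ?_
  simp only [Nat.factorial_succ, Nat.cast_mul]
  field_simp
  push_cast
  ring

lemma phi_wronskian_pos (k : ℕ) (hk : 1 ≤ k) (r : ℝ) (hr : 0 < r) :
    0 < ∑ j ∈ range (k + 1),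
          (1 / ((Nat.factorial (2 * j) : ℝ) * (Nat.factorial (2 * k) : ℝ)))
            * (1 / (2 * (j : ℝ) + 1) - 1 / (2 * (k : ℝ) + 1)) * r ^ (2 * k + 2 * j + 1) := by
  refine sum_pos' (fun j hj ↦ ?_) ⟨0, by simp, ?_⟩
  · have hjk : (j : ℝ) ≤ k := by exact_mod_cast Nat.lt_succ_iff.mp (mem_range.mp hj)
    have hcoeff : 1 / (2 * (k : ℝ) + 1) ≤ 1 / (2 * (j : ℝ) + 1) :=
      one_div_le_one_div_of_le (by positivity) (by linarith)
    have : 0 ≤ 1 / (2 * (j : ℝ) + 1) - 1 / (2 * (k : ℝ) + 1) := sub_nonneg.mpr hcoeff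
    positivity
  · have hk' : (1 : ℝ) ≤ k := by exact_mod_cast hk
    have hcoeff : 1 / (2 * (k : ℝ) + 1) < 1 := by rw [div_lt_one (by positivity)]; linarith
    have : 0 < 1 / (2 * ((0 : ℕ) : ℝ) + 1) - 1 / (2 * (k : ℝ) + 1) := by simpa using hcoeff
    positivity

theorem stmt_0 (k : ℕ) (hk : 1 ≤ k) :
    ∀ r : ℝ, 0 < r →
      deriv (phi k) r * deriv (deriv (phi k)) r
          - phi k r * deriv (deriv (deriv (phi k))) r
        = ∑ j ∈ Finset.range (k + 1),
            (1 / ((Nat.factorial (2 * j) : ℝ) * (Nat.factorial (2 * k) : ℝ)))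
              * (1 / (2 * (j : ℝ) + 1) - 1 / (2 * (k : ℝ) + 1)) * r ^ (2 * k + 2 * j + 1)
      ∧ 0 < deriv (phi k) r * deriv (deriv (phi k)) r
              - phi k r * deriv (deriv (deriv (phi k))) r := fun r hr ↦
  ⟨phi_wronskian_eq_sum k r, phi_wronskian_eq_sum k r ▸ phi_wronskian_pos k hk r hr⟩
end

section
/- Let n ≥ 4, k ≥ 1, φ(r) = ∑_{j=0}^{k} r^{2j+1}/(2j+1)!, and N = (2k+1)(n−1)+1. Define g(r) = (n−1)(φ(r)²φ'''(r) + (n−4)φ(r)φ'(r)φ''(r) − (n−3)φ'(r)³)/φ(r)³. Then r³ g(r) → −(n−1)(n−3) as r → 0⁺ and r³ g(r) → −(n−1)(2k+1)(2k(n−1)+n−3) as r → ∞. -/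
/-- The bi-Laplacian `Δ²a` of `a(r) = r` on the rotationally symmetric manifold `M_k^n`. -/
noncomputable def biLap (n k : ℕ) (r : ℝ) : ℝ :=
  ((n : ℝ) - 1) *
    (phi k r ^ 2 * deriv (deriv (deriv (phi k))) r
      + ((n : ℝ) - 4) * phi k r * deriv (phi k) r * deriv (deriv (phi k)) r
      - ((n : ℝ) - 3) * (deriv (phi k) r) ^ 3) / phi k r ^ 3

open Filter Topology Polynomial

noncomputable def biLapForm (ν : ℝ) (u : ℕ → ℝ) : ℝ :=
  (ν - 1) * (u 0 ^ 2 * u 3 + (ν - 4) * u 0 * u 1 * u 2 - (ν - 3) * u 1 ^ 3) / u 0 ^ 3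

lemma biLap_eq_biLapForm (n k : ℕ) (r : ℝ) :
    biLap n k r = biLapForm n (fun i => deriv^[i] (phi k) r) := rfl

lemma biLapForm_scale (ν r : ℝ) {s : ℝ} (hs : s ≠ 0) (u : ℕ → ℝ) :
    biLapForm ν (fun i => r ^ i * u i / s) = r ^ 3 * biLapForm ν u := by
  unfold biLapForm
  rcases eq_or_ne (u 0) 0 with hu | hu
  · simp [hu]
  · field_simp

lemma biLapForm_descFactorial (ν : ℝ) (d : ℕ) {a : ℝ} (ha : a ≠ 0) :
    biLapForm ν (fun i => d.descFactorial i * a) = (ν - 1) * d * (2 - (ν - 1) * d) := by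
  simp only [biLapForm, ← descPochhammer_eval_eq_descFactorial ℝ]
  simp only [descPochhammer_succ_right, descPochhammer_zero, eval_mul, eval_sub, eval_X, eval_one,
    eval_ofNat, one_mul, Nat.cast_one, Nat.cast_ofNat, CharP.cast_eq_zero, sub_zero]
  field_simp
  ring

lemma tendsto_biLapForm {ν : ℝ} {l : Filter ℝ} {U : ℝ → ℕ → ℝ} {u : ℕ → ℝ}
    (hU : ∀ i, Tendsto (fun r => U r i) l (𝓝 (u i))) (hu : u 0 ≠ 0) :
    Tendsto (fun r => biLapForm ν (U r)) l (𝓝 (biLapForm ν u)) :=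
  (tendsto_const_nhds.mul ((((hU 0).pow 2).mul (hU 3)).add
    (((tendsto_const_nhds.mul (hU 0)).mul (hU 1)).mul (hU 2)) |>.sub
    (tendsto_const_nhds.mul ((hU 1).pow 3)))).div ((hU 0).pow 3) (pow_ne_zero 3 hu)

theorem tendsto_pow_three_mul_biLapForm {ν : ℝ} {l : Filter ℝ} {φ : ℝ → ℝ} {d : ℕ} {a : ℝ}
    (ha : a ≠ 0) (hl : ∀ᶠ r in l, r ≠ 0)
    (hφ : ∀ i, Tendsto (fun r => r ^ i * deriv^[i] φ r / r ^ d) l (𝓝 (d.descFactorial i * a))) :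
    Tendsto (fun r => r ^ 3 * biLapForm ν (fun i => deriv^[i] φ r)) l
      (𝓝 ((ν - 1) * d * (2 - (ν - 1) * d))) := by
  rw [← biLapForm_descFactorial ν d ha]
  refine (tendsto_biLapForm hφ (by simpa using ha)).congr' ?_
  filter_upwards [hl] with r hr
  exact biLapForm_scale ν r (pow_ne_zero d hr) _

lemma iterate_deriv_eval (P : ℝ[X]) (i : ℕ) :
    deriv^[i] (fun x => P.eval x) = fun x => (derivative^[i] P).eval x := by
  induction i with
  | zero => rfl
  | succ i ih =>
    rw [Function.iterate_succ_apply', ih, Function.iterate_succ_apply']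
    exact funext fun x => Polynomial.deriv _

lemma tendsto_pow_mul_iterate_derivative_div_atTop (P : ℝ[X]) (i : ℕ) :
    Tendsto (fun r => r ^ i * (derivative^[i] P).eval r / r ^ P.natDegree) atTop
      (𝓝 (P.natDegree.descFactorial i * P.leadingCoeff)) := by
  rcases eq_or_ne P 0 with rfl | hP
  · simp
  rcases lt_or_ge P.natDegree i with hi | hi
  · simp [iterate_derivative_eq_zero hi, Nat.descFactorial_eq_zero_iff_lt.mpr hi]
  have hcoeff : (derivative^[i] P).coeff (P.natDegree - i) =
      P.natDegree.descFactorial i * P.leadingCoeff := by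
    rw [coeff_iterate_derivative, Nat.sub_add_cancel hi, nsmul_eq_mul, leadingCoeff]
  have hcoeff_ne : (derivative^[i] P).coeff (P.natDegree - i) ≠ 0 := by
    rw [hcoeff]
    exact mul_ne_zero (by exact_mod_cast (Nat.descFactorial_pos.mpr hi).ne')
      (leadingCoeff_ne_zero.mpr hP)
  have hdeg : (derivative^[i] P).natDegree = P.natDegree - i :=
    natDegree_eq_of_le_of_coeff_ne_zero (natDegree_iterate_derivative P i) hcoeff_ne
  have hne : derivative^[i] P ≠ 0 := fun h => hcoeff_ne (by simp [h])
  have hlim := div_tendsto_atTop_leadingCoeff_div_of_degree_eq (X ^ i * derivative^[i] P)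
    (X ^ P.natDegree) (by
      rw [degree_mul, degree_X_pow, degree_X_pow, degree_eq_natDegree hne, hdeg]
      norm_cast
      omega)
  have hlc : (derivative^[i] P).leadingCoeff = P.natDegree.descFactorial i * P.leadingCoeff := by
    rw [leadingCoeff, hdeg, hcoeff]
  rw [mul_comm, leadingCoeff_mul_X_pow, leadingCoeff_X_pow, div_one, hlc] at hlim
  simpa [mul_comm] using hlim

lemma tendsto_pow_mul_iterate_derivative_div_nhdsNE (P : ℝ[X]) (hP : P.eval 0 = 0) (i : ℕ) :
    Tendsto (fun r => r ^ i * (derivative^[i] P).eval r / r ^ 1) (𝓝[≠] 0)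
      (𝓝 ((1 : ℕ).descFactorial i * P.derivative.eval 0)) := by
  cases i with
  | zero =>
    simpa [hP, div_eq_inv_mul] using hasDerivAt_iff_tendsto_slope_zero.mp (P.hasDerivAt 0)
  | succ j =>
    have hcont : Tendsto (fun r => r ^ j * (derivative^[j + 1] P).eval r) (𝓝[≠] 0)
        (𝓝 (0 ^ j * (derivative^[j + 1] P).eval 0)) :=
      (((continuous_pow j).mul (Polynomial.continuous _)).tendsto 0).mono_left nhdsWithin_le_nhds
    have hvalue : (0 : ℝ) ^ j * (derivative^[j + 1] P).eval 0 =
        (1 : ℕ).descFactorial (j + 1) * P.derivative.eval 0 := by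
      cases j <;> simp [Nat.descFactorial]
    rw [← hvalue]
    refine hcont.congr' ?_
    filter_upwards [self_mem_nhdsWithin] with r (hr : r ≠ 0)
    field_simp
    ring

noncomputable def phiPoly (k : ℕ) : ℝ[X] :=
  ∑ j ∈ Finset.range (k + 1), monomial (2 * j + 1) ((Nat.factorial (2 * j + 1) : ℝ)⁻¹)

lemma eval_phiPoly (k : ℕ) (r : ℝ) : (phiPoly k).eval r = phi k r := by
  simp [phiPoly, phi, eval_finsetSum, div_eq_inv_mul]

lemma natDegree_phiPoly (k : ℕ) : (phiPoly k).natDegree = 2 * k + 1 := by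
  induction k with
  | zero => simp [phiPoly]
  | succ k ih =>
    rw [phiPoly, Finset.sum_range_succ, ← phiPoly, natDegree_add_eq_right_of_natDegree_lt,
      natDegree_monomial, if_neg (by positivity)]
    rw [ih, natDegree_monomial, if_neg (by positivity)]
    omega

lemma eval_phiPoly_zero (k : ℕ) : (phiPoly k).eval 0 = 0 := by
  simp [eval_phiPoly, phi]

lemma eval_derivative_phiPoly_zero (k : ℕ) : (phiPoly k).derivative.eval 0 = 1 := by
  rw [← coeff_zero_eq_eval_zero, coeff_derivative, phiPoly, finsetSum_coeff,
    Finset.sum_eq_single 0]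
  · simp
  · intro j _ hj
    rw [coeff_monomial, if_neg (by omega)]
  · simp

theorem stmt_6_general (n k : ℕ) :
    Filter.Tendsto (fun r : ℝ => r ^ 3 * biLap n k r)
        (nhdsWithin 0 (Set.Ioi 0)) (nhds (-(((n : ℝ) - 1) * ((n : ℝ) - 3))))
      ∧ Filter.Tendsto (fun r : ℝ => r ^ 3 * biLap n k r)
          Filter.atTop
          (nhds (-(((n : ℝ) - 1) * (2 * (k : ℝ) + 1) *
            (2 * (k : ℝ) * ((n : ℝ) - 1) + (n : ℝ) - 3)))) := by
  have hphi : phi k = fun r => (phiPoly k).eval r := funext fun r => (eval_phiPoly k r).symm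
  simp only [biLap_eq_biLapForm, hphi]
  constructor
  · have h := tendsto_pow_three_mul_biLapForm (ν := n) (l := 𝓝[≠] 0)
      (φ := fun r => (phiPoly k).eval r) (d := 1) one_ne_zero
      self_mem_nhdsWithin fun i => by
        simpa [iterate_deriv_eval, eval_derivative_phiPoly_zero] using
          tendsto_pow_mul_iterate_derivative_div_nhdsNE _ (eval_phiPoly_zero k) i
    convert h.mono_left (nhdsGT_le_nhdsNE 0) using 2
    push_cast
    ring
  · have hne : phiPoly k ≠ 0 := ne_zero_of_natDegree_gt (n := 0) (by simp [natDegree_phiPoly])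
    have h := tendsto_pow_three_mul_biLapForm (ν := n) (φ := fun r => (phiPoly k).eval r)
      (d := 2 * k + 1) (leadingCoeff_ne_zero.mpr hne) (eventually_ne_atTop 0) fun i => by
        simpa [iterate_deriv_eval, natDegree_phiPoly] using
          tendsto_pow_mul_iterate_derivative_div_atTop (phiPoly k) i
    convert h using 2
    push_cast
    ring

theorem stmt_6 (n k : ℕ) (hn : 4 ≤ n) (hk : 1 ≤ k) (N : ℕ)
    (hN : N = (2 * k + 1) * (n - 1) + 1) :
    Filter.Tendsto (fun r : ℝ => r ^ 3 * biLap n k r)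
        (nhdsWithin 0 (Set.Ioi 0)) (nhds (-(((n : ℝ) - 1) * ((n : ℝ) - 3))))
      ∧ Filter.Tendsto (fun r : ℝ => r ^ 3 * biLap n k r)
          Filter.atTop
          (nhds (-(((n : ℝ) - 1) * (2 * (k : ℝ) + 1) *
            (2 * (k : ℝ) * ((n : ℝ) - 1) + (n : ℝ) - 3)))) :=
  stmt_6_general n k
end
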